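/- For every s ∈ ℂ with 0 < Re(s) < 1/2: (2^{1−2s} − 1) · (cos(πs/2) + sin(πs/2)) · π^{−s} · Γ(s) · ζ(2s) = 2 · (8/π)^{−s} · [ Γ(1/4 − s/2) / Γ(1/4 + s/2) ] · ζ₂(1 − 2s). -/

import Mathlib

open Real

noncomputable section

/-- The Riemann zeta function with its Euler factor at 2 removed. -/
def zeta2 (s : ℂ) : ℂ := riemannZeta s * (1 - (2 : ℂ) ^ (-s))

set_option maxHeartbeats 1600000 in
theorem gamma_zeta_identity (s : ℂ) (h0 : 0 < s.re) (h1 : s.re < 1 / 2) :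
    ((2 : ℂ) ^ (1 - 2 * s) - 1) *
        (Complex.cos ((π : ℂ) * s / 2) + Complex.sin ((π : ℂ) * s / 2)) *
        (π : ℂ) ^ (-s) * Complex.Gamma s * riemannZeta (2 * s) =
      2 * ((8 : ℂ) / (π : ℂ)) ^ (-s) *
        (Complex.Gamma (1 / 4 - s / 2) / Complex.Gamma (1 / 4 + s / 2)) *
        zeta2 (1 - 2 * s) := by
  have hπ : (0:ℝ) < π := Real.pi_pos
  have hπc : (π:ℂ) ≠ 0 := by exact_mod_cast hπ.ne'
  have h2ne : (2:ℂ) ≠ 0 := two_ne_zero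
  set u : ℂ := (2:ℂ) ^ s with hu_def
  set v : ℂ := (π:ℂ) ^ s with hv_def
  set c : ℂ := Complex.cos ((π : ℂ) * s / 2) with hc_def
  set sn : ℂ := Complex.sin ((π : ℂ) * s / 2) with hsn_def
  set G1 : ℂ := Complex.Gamma (1 / 4 - s / 2) with hG1_def
  set G2 : ℂ := Complex.Gamma (1 / 4 + s / 2) with hG2_def
  set G3 : ℂ := Complex.Gamma (3 / 4 + s / 2) with hG3_def
  set Gs : ℂ := Complex.Gamma s with hGs_def
  set Gh : ℂ := Complex.Gamma (s + 1 / 2) with hGh_def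
  set Γ2 : ℂ := Complex.Gamma (2 * s) with hΓ2_def
  set s2 : ℂ := ((Real.sqrt 2 : ℝ) : ℂ) with hs2_def
  set sp : ℂ := ((Real.sqrt π : ℝ) : ℂ) with hsp_def
  clear_value u v c sn G1 G2 G3 Gs Gh Γ2 s2 sp
  have hu : u ≠ 0 := by rw [hu_def]; simp [Complex.cpow_eq_zero_iff]
  have hv : v ≠ 0 := by rw [hv_def]; simp [Complex.cpow_eq_zero_iff, hπc]
  have hs2sq : s2 * s2 = 2 := by
    rw [hs2_def]; norm_cast
    exact Real.mul_self_sqrt (by norm_num)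
  have hspsq : sp * sp = (π:ℂ) := by
    rw [hsp_def]; norm_cast
    exact Real.mul_self_sqrt hπ.le
  have hs2ne : s2 ≠ 0 := by
    rw [hs2_def]; norm_cast; positivity
  have hspne : sp ≠ 0 := by
    rw [hsp_def]; norm_cast; positivity
  -- Gamma values nonzero
  have hG1ne : G1 ≠ 0 := by
    rw [hG1_def]
    apply Complex.Gamma_ne_zero_of_re_pos
    simp only [Complex.sub_re, Complex.div_ofNat_re, Complex.one_re]
    norm_num; linarith
  have hG2ne : G2 ≠ 0 := by
    rw [hG2_def]
    apply Complex.Gamma_ne_zero_of_re_pos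
    simp only [Complex.add_re, Complex.div_ofNat_re, Complex.one_re]
    norm_num; linarith
  have hG3ne : G3 ≠ 0 := by
    rw [hG3_def]
    apply Complex.Gamma_ne_zero_of_re_pos
    simp only [Complex.add_re, Complex.div_ofNat_re]
    norm_num; linarith
  have hGsne : Gs ≠ 0 := by
    rw [hGs_def]; exact Complex.Gamma_ne_zero_of_re_pos h0
  have hGhne : Gh ≠ 0 := by
    rw [hGh_def]
    apply Complex.Gamma_ne_zero_of_re_pos
    simp only [Complex.add_re, Complex.div_ofNat_re, Complex.one_re]
    norm_num; linarith
  -- cpow computations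
  have hpi_neg_s : (π:ℂ) ^ (-s) = v⁻¹ := by rw [Complex.cpow_neg, hv_def]
  have h2pow : (2:ℂ) ^ (1 - 2*s) = 2 / u^2 := by
    rw [show (1:ℂ) - 2*s = 1 + (-s + -s) by ring, Complex.cpow_add _ _ h2ne,
      Complex.cpow_add _ _ h2ne, Complex.cpow_one, Complex.cpow_neg, ← hu_def,
      ← mul_inv, ← pow_two, ← div_eq_mul_inv]
  have h2pow' : (2:ℂ) ^ (-(1 - 2*s)) = u^2 / 2 := by
    rw [Complex.cpow_neg, h2pow, inv_div]
  have h8pow : ((8:ℂ) / (π:ℂ)) ^ (-s) = v / u^3 := by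
    rw [show ((8:ℂ)/(π:ℂ)) = ((2:ℝ):ℂ) * (((4/π):ℝ):ℂ) by push_cast; ring,
      Complex.mul_cpow_ofReal_nonneg (by norm_num) (by positivity),
      show (((4/π):ℝ):ℂ) = ((2:ℝ):ℂ) * (((2/π):ℝ):ℂ) by push_cast; ring,
      Complex.mul_cpow_ofReal_nonneg (by norm_num) (by positivity),
      show (((2/π):ℝ):ℂ) = ((2:ℝ):ℂ) * (((π⁻¹):ℝ):ℂ) by push_cast; ring,
      Complex.mul_cpow_ofReal_nonneg (by norm_num) (by positivity),
      show (((π⁻¹):ℝ):ℂ) = ((π:ℂ))⁻¹ by push_cast; ring,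
      Complex.inv_cpow _ _ (by rw [Complex.arg_ofReal_of_nonneg hπ.le]; exact Real.pi_ne_zero.symm)]
    simp only [Complex.ofReal_ofNat, Complex.cpow_neg]
    rw [← hu_def, ← hv_def, inv_inv,
      show u⁻¹ * (u⁻¹ * (u⁻¹ * v)) = v * (u * (u * u))⁻¹ by
        rw [mul_inv, mul_inv]; ring,
      show u * (u * u) = u^3 by ring, ← div_eq_mul_inv]
  have h2pipow : ((2:ℂ) * (π:ℂ)) ^ (-(2*s)) = 1 / (u^2 * v^2) := by
    rw [show ((2:ℂ) * (π:ℂ)) = ((2:ℝ):ℂ) * ((π:ℝ):ℂ) by push_cast; ring,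
      Complex.mul_cpow_ofReal_nonneg (by norm_num) hπ.le,
      Complex.cpow_neg, Complex.cpow_neg,
      show (2:ℂ)*s = s + s by ring,
      Complex.cpow_add _ _ (by norm_num : ((2:ℝ):ℂ) ≠ 0),
      Complex.cpow_add _ _ (by exact_mod_cast hπ.ne' : ((π:ℝ):ℂ) ≠ 0)]
    simp only [Complex.ofReal_ofNat]
    rw [← hu_def, ← hv_def, one_div,
      show u^2 * v^2 = (u*u) * (v*v) by ring]
    simp only [mul_inv]
  -- duplication formula at s
  have hdup1 : Gs * Gh * u^2 = Γ2 * 2 * sp := by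
    have h := Complex.Gamma_mul_Gamma_add_half s
    rw [h2pow, ← hGs_def, ← hGh_def, ← hΓ2_def, ← hsp_def] at h
    field_simp at h
    linear_combination h
  -- duplication formula at 1/4 + s/2
  have hdup2 : G2 * G3 * u = Gh * s2 * sp := by
    have h := Complex.Gamma_mul_Gamma_add_half (1/4 + s/2)
    rw [show (1:ℂ) - 2 * (1/4 + s/2) = 1/2 + -s by ring,
      Complex.cpow_add _ _ h2ne, Complex.cpow_neg,
      show (1:ℂ)/4 + s/2 + 1/2 = 3/4 + s/2 by ring,
      show (2:ℂ) * (1/4 + s/2) = s + 1/2 by ring] at h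
    have hhalf : (2:ℂ) ^ ((1:ℂ)/2) = s2 := by
      rw [hs2_def, Real.sqrt_eq_rpow, Complex.ofReal_cpow (by norm_num : (0:ℝ) ≤ 2)]
      norm_num
    rw [hhalf, ← hG2_def, ← hG3_def, ← hGh_def, ← hsp_def, ← hu_def] at h
    rw [h]
    field_simp
  -- reflection formula
  have hrefl : G1 * G3 * (c - sn) = s2 * (π:ℂ) := by
    have h := Complex.Gamma_mul_Gamma_one_sub (1/4 - s/2)
    rw [show (1:ℂ) - (1/4 - s/2) = 3/4 + s/2 by ring, ← hG1_def, ← hG3_def] at h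
    have hsin : Complex.sin ((π:ℂ) * (1/4 - s/2)) = (s2/2) * (c - sn) := by
      rw [show (π:ℂ) * (1/4 - s/2) = ((π/4 : ℝ) : ℂ) - (π:ℂ) * s / 2 by push_cast; ring,
        Complex.sin_sub, ← Complex.ofReal_sin, ← Complex.ofReal_cos,
        Real.sin_pi_div_four, Real.cos_pi_div_four, ← hc_def, ← hsn_def, hs2_def]
      push_cast
      ring
    rw [hsin] at h
    have hne' : (s2/2) * (c - sn) ≠ 0 := by
      intro hz
      rw [hz, div_zero] at h
      rcases mul_eq_zero.mp h with h' | h'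
      · exact hG1ne h'
      · exact hG3ne h'
    rw [eq_div_iff hne'] at h
    refine mul_right_cancel₀ hs2ne ?_
    linear_combination 2*h - ((π:ℂ))*hs2sq
  have hcmsne : c - sn ≠ 0 := by
    intro hz
    rw [hz, mul_zero] at hrefl
    rcases mul_eq_zero.mp hrefl.symm with h' | h'
    · exact hs2ne h'
    · exact hπc h'
  -- solved forms
  have hGh_eq : Gh = G2 * G3 * u / (s2 * sp) := by
    rw [eq_div_iff (by simp [hs2ne, hspne])]
    linear_combination -hdup2
  have hΓ2' : Γ2 = Gs * Gh * u^2 / (2 * sp) := by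
    rw [eq_div_iff (by simp [hspne])]
    linear_combination -hdup1
  have hcms_eq : c - sn = s2 * (π:ℂ) / (G1 * G3) := by
    rw [eq_div_iff (by simp [hG1ne, hG3ne])]
    linear_combination hrefl
  -- key formula for Γ2
  have hΓ2eq : Γ2 = Gs * G2 * u^3 / (2 * G1 * (c - sn)) := by
    rw [hΓ2', hGh_eq, hcms_eq]
    field_simp
    linear_combination -hspsq
  -- functional equation
  have hfe : riemannZeta (1 - 2*s) = 2 * (1/(u^2*v^2)) * Γ2 * (c*c - sn*sn) * riemannZeta (2*s) := by
    have hne : ∀ n : ℕ, 2*s ≠ -n := by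
      intro n hn
      have h' : (2*s).re = (-(n:ℂ)).re := congrArg Complex.re hn
      simp [Complex.mul_re] at h'
      have : (0:ℝ) ≤ (n:ℝ) := Nat.cast_nonneg n
      linarith
    have hne1 : 2*s ≠ 1 := by
      intro hn
      have h' : (2*s).re = (1:ℂ).re := congrArg Complex.re hn
      simp [Complex.mul_re] at h'
      linarith
    have h := riemannZeta_one_sub hne hne1
    rw [h2pipow, ← hΓ2_def] at h
    rw [h]
    rw [show (π:ℂ) * (2*s) / 2 = (π:ℂ)*s/2 + (π:ℂ)*s/2 by ring, Complex.cos_add,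
      ← hc_def, ← hsn_def]
  have hkey : Γ2 * (2 * G1 * (c - sn)) = Gs * G2 * u^3 := by
    rw [hΓ2eq]
    field_simp
  -- final assembly
  rw [zeta2, hfe, h2pow, hpi_neg_s, h8pow, h2pow']
  field_simp
  linear_combination (-((2-u^2)*(c+sn)*riemannZeta (2*s))) * hkey
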